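/- arXiv:2406.12989 — 2 statements merged into one kernel-verified Lean document; each statement's English description precedes it below -/
import Mathlib

section
/- Let d ≥ 1 be an integer and let T be the complete binary tree (q = 2) of depth d. Then Φ_V(T) ≥ ⌊(d − ⌈log₂(3d)⌉)/2⌋, and moreover ⌊(d − ⌈log₂(3d)⌉)/2⌋ ≥ (d − log₂(d))/2 − (3 + log₂(3))/2. -/
open scoped Classical

/-- A vertex of the complete `q`-ary tree of depth `d`: a sequence over `Fin q`
of length at most `d`. -/
def QV (q d : ℕ) : Type := {l : List (Fin q) // l.length ≤ d}

instance (q d : ℕ) : Finite (QV q d) :=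
  (List.finite_length_le (Fin q) d).to_subtype

/-- The complete `q`-ary tree of depth `d`: two vertices are adjacent exactly when
one is obtained from the other by appending a single element. -/
def qTree (q d : ℕ) : SimpleGraph (QV q d) where
  Adj u v := (∃ a : Fin q, v.val = u.val ++ [a]) ∨ (∃ a : Fin q, u.val = v.val ++ [a])
  symm := ⟨by intro u v h; tauto⟩
  loopless := ⟨by
    rintro u (⟨a, ha⟩ | ⟨a, ha⟩) <;>
    · have := congrArg List.length ha
      simp at this⟩

/-- The vertex border `δ(S)`: vertices outside `S` with a neighbour in `S`. -/
def vertexBorder {V : Type*} (G : SimpleGraph V) (S : Set V) : Set V :=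
  {v | v ∉ S ∧ ∃ u ∈ S, G.Adj u v}

/-- `Φ_V(G, s)`: the minimum border size over vertex sets of size `s`. -/
noncomputable def isoProfile {V : Type*} (G : SimpleGraph V) (s : ℕ) : ℕ :=
  sInf ((fun S => (vertexBorder G S).ncard) '' {S : Set V | S.ncard = s})

/-- `Φ_V(G)`: the vertex-isoperimetric peak, `max_{0 ≤ s ≤ |V|} Φ_V(G, s)`. -/
noncomputable def isoPeak {V : Type*} (G : SimpleGraph V) : ℕ :=
  sSup (isoProfile G '' Set.Icc 0 (Nat.card V))

/-- The vertex separation number: for each linear layout (a bijection from the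
vertices to `{1, …, |V|}`, here modelled as `V ≃ Fin |V|`) take the maximum
border size of its prefix sets, then minimize over layouts. -/
noncomputable def vsNum {V : Type*} (G : SimpleGraph V) : ℕ :=
  sInf {n | ∃ L : V ≃ Fin (Nat.card V),
    n = sSup {m | ∃ i : Fin (Nat.card V),
      m = (vertexBorder G {u | (L u : ℕ) ≤ (i : ℕ)}).ncard}}

namespace QV

variable {q d : ℕ}

/-- Level `i`: vertices at distance `i` from the root. -/
def level (q d : ℕ) (i : ℕ) : Set (QV q d) := {w | w.val.length = i}

/-- Descendants of `u` (including `u` itself). -/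
def desc (u : QV q d) : Set (QV q d) := {w | u.val <+: w.val}

/-- `w` is a child of `u`. -/
def IsChildOf (w u : QV q d) : Prop := ∃ a : Fin q, w.val = u.val ++ [a]

/-- `u` is to the left of `v`: same level and lexicographically smaller. -/
def LeftOf (u v : QV q d) : Prop :=
  u.val.length = v.val.length ∧ List.Lex (· < ·) u.val v.val

/-- `u` precedes `v` in the breadth-first ordering of the tree. -/
def Precedes (u v : QV q d) : Prop :=
  u.val.length < v.val.length ∨
    (u.val.length = v.val.length ∧ List.Lex (· < ·) u.val v.val)

/-- `u, v` are swappable in `S`. -/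
def Swappable (S : Set (QV q d)) (u v : QV q d) : Prop :=
  LeftOf u v ∧ ((u ∉ S ∧ v ∈ S) ∨
    (u ∉ S ∧ v ∉ S ∧ (∀ w, IsChildOf w u → w ∉ S) ∧ (∃ w, IsChildOf w v ∧ w ∈ S)))

/-- Level `i` of `S` is left-ordered: no swappable pair in level `i`. -/
def LevelLeftOrdered (S : Set (QV q d)) (i : ℕ) : Prop :=
  ∀ u v : QV q d, u.val.length = i → ¬ Swappable S u v

/-- `S` is left-ordered: every level is left-ordered. -/
def LeftOrdered (S : Set (QV q d)) : Prop := ∀ i, LevelLeftOrdered S i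

/-- The canonical map used in a treeswap between `u` and `v`: a descendant of `u`
is sent to the corresponding descendant of `v` (same suffix), and vice versa;
other vertices are fixed. -/
noncomputable def swapAt (u v w : QV q d) : QV q d :=
  if h : u.val <+: w.val ∧ (v.val ++ w.val.drop u.val.length).length ≤ d then
    ⟨v.val ++ w.val.drop u.val.length, h.2⟩
  else if h' : v.val <+: w.val ∧ (u.val ++ w.val.drop v.val.length).length ≤ d then
    ⟨u.val ++ w.val.drop v.val.length, h'.2⟩
  else w

/-- The treeswap of `S` between `u` and `v`. -/
noncomputable def treeswap (S : Set (QV q d)) (u v : QV q d) : Set (QV q d) :=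
  {w | swapAt u v w ∈ S}

/-- The strict partial order `A < B` on subsets of the tree. -/
def SetPrec (A B : Set (QV q d)) : Prop :=
  (∀ i, (A ∩ level q d i).ncard = (B ∩ level q d i).ncard) ∧
  ∃ v, v ∈ A ∧ v ∉ B ∧ ∀ w, Precedes w v → (w ∈ A ↔ w ∈ B)

/-- `S` is down-compressed. -/
def DownCompressed (S : Set (QV q d)) : Prop :=
  ∀ u ∈ S, ∀ v ∉ S,
    (vertexBorder (qTree q d) S).ncard ≤
      (vertexBorder (qTree q d) ((S ∪ {v}) \ {u})).ncard ∧
    (u.val.length < v.val.length →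
      (vertexBorder (qTree q d) S).ncard <
        (vertexBorder (qTree q d) ((S ∪ {v}) \ {u})).ncard)

/-- `S'` is an aeolian compression of `S`. -/
def IsAeolianCompression (S S' : Set (QV q d)) : Prop :=
  ∃ u v : QV q d, LeftOf u v ∧
    ∃ R A : Set (QV q d), R.Nonempty ∧ R ⊆ S ∧ R ⊆ desc v ∧
      A ⊆ desc u ∧ Disjoint A S ∧ A.ncard = R.ncard ∧
      S' = (S \ R) ∪ A ∧
      S'.ncard = S.ncard ∧
      (vertexBorder (qTree q d) S').ncard ≤ (vertexBorder (qTree q d) S).ncard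

/-- `S` is aeolian-compressed. -/
def AeolianCompressed (S : Set (QV q d)) : Prop :=
  LeftOrdered S ∧ DownCompressed S ∧ ∀ S', ¬ IsAeolianCompression S S'

end QV

/-!
Count `S` by subtree sizes `2 ^ (h + 1) - 1` (summation by parts along the tree): `|S|` is the
root term plus, for each border vertex of height `h` with `e` children in `S` (and `p = 1` if its
parent is in `S`, `p = 0` otherwise), the term
`e (2 ^ h - 1) - p (2 ^ (h + 1) - 1) = (e - 2 p) 2 ^ h + (p - e)`.
So if the border has `b` vertices, `|S|` differs by at most `2 b + 1` from a sum of `b + 1` signed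
powers of two, and such a sum has at most `b + 1` blocks of ones in binary. The number
`s = 2 ^ t (4 ^ (k + 1) - 1) / 3 = 0101…01 0…0₂` (`k + 1` ones, `t` zeros) keeps its `k + 1`
blocks under perturbations smaller than `2 ^ t`, so when `2 k ≤ 2 ^ t` every `S` of size `s` has
at least `k` border vertices. For `t = ⌈log₂ 3d⌉` and `k = ⌊(d - t) / 2⌋`, `s` fits into the tree.
-/

open Finset

/-- The number of maximal blocks of ones in the binary expansion of `n`; the lowest block ends at
bit `0` exactly when `n % 4 = 1`. -/
def bitRuns (n : ℕ) : ℕ :=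
  if n = 0 then 0 else bitRuns (n / 2) + if n % 4 = 1 then 1 else 0
decreasing_by omega

@[simp]
lemma bitRuns_zero : bitRuns 0 = 0 := by
  rw [bitRuns, if_pos rfl]

@[simp]
lemma bitRuns_two_mul (n : ℕ) : bitRuns (2 * n) = bitRuns n := by
  rcases Nat.eq_zero_or_pos n with rfl | hn
  · rfl
  · rw [bitRuns, if_neg (by omega), if_neg (by omega), Nat.mul_div_cancel_left _ two_pos,
      add_zero]

lemma bitRuns_two_mul_add_one (n : ℕ) :
    bitRuns (2 * n + 1) = bitRuns n + (n + 1) % 2 := by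
  rw [bitRuns, if_neg (by omega), show (2 * n + 1) / 2 = n by omega]
  split <;> omega

lemma bitRuns_succ_le (n : ℕ) : bitRuns (n + 1) ≤ bitRuns n + 1 := by
  induction n using Nat.strong_induction_on with
  | _ n ih =>
    obtain ⟨m, rfl | rfl⟩ := Nat.even_or_odd' n
    · rw [bitRuns_two_mul_add_one, bitRuns_two_mul]
      omega
    · have := ih m (by omega)
      rw [show 2 * m + 1 + 1 = 2 * (m + 1) by ring, bitRuns_two_mul, bitRuns_two_mul_add_one]
      omega

lemma bitRuns_le_succ_add_one (n : ℕ) : bitRuns n ≤ bitRuns (n + 1) + 1 := by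
  induction n using Nat.strong_induction_on with
  | _ n ih =>
    obtain ⟨m, rfl | rfl⟩ := Nat.even_or_odd' n
    · rw [bitRuns_two_mul_add_one, bitRuns_two_mul]
      omega
    · rw [show 2 * m + 1 + 1 = 2 * (m + 1) by ring, bitRuns_two_mul, bitRuns_two_mul_add_one]
      obtain ⟨w, rfl | rfl⟩ := Nat.even_or_odd' m
      · rw [bitRuns_two_mul_add_one, bitRuns_two_mul]
        omega
      · have := ih (2 * w + 1) (by omega)
        omega

lemma bitRuns_pos {n : ℕ} (hn : n ≠ 0) : 0 < bitRuns n := by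
  induction n using Nat.strong_induction_on with
  | _ n ih =>
    obtain ⟨m, rfl | rfl⟩ := Nat.even_or_odd' n
    · rw [bitRuns_two_mul]
      exact ih m (by omega) (by omega)
    · rw [bitRuns_two_mul_add_one]
      rcases Nat.eq_zero_or_pos m with rfl | hm
      · simp
      · have := ih m (by omega) hm.ne'
        omega

lemma bitRuns_two_pow_mul_add {L r : ℕ} (u : ℕ) (hr : r < 2 ^ L) :
    bitRuns (2 ^ (L + 1) * u + r) = bitRuns u + bitRuns r := by
  induction L generalizing r with
  | zero =>
    obtain rfl : r = 0 := by simpa using hr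
    simp
  | succ L ih =>
    have hr2 : r / 2 < 2 ^ L := by rw [pow_succ] at hr; omega
    obtain ⟨m, rfl | rfl⟩ := Nat.even_or_odd' r
    · rw [show 2 ^ (L + 1 + 1) * u + 2 * m = 2 * (2 ^ (L + 1) * u + m) by ring, bitRuns_two_mul,
        bitRuns_two_mul, ih (by omega)]
    · rw [show 2 ^ (L + 1 + 1) * u + (2 * m + 1) = 2 * (2 * (2 ^ L * u) + m) + 1 by ring,
        bitRuns_two_mul_add_one, bitRuns_two_mul_add_one]
      have h := ih (r := m) (by omega)
      rw [pow_succ', mul_assoc] at h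
      omega

/-- `0101…01` in binary, with `k` ones. -/
def repunit4 : ℕ → ℕ
  | 0 => 0
  | k + 1 => 4 * repunit4 k + 1

lemma bitRuns_repunit4 (k : ℕ) : bitRuns (repunit4 k) = k := by
  induction k with
  | zero => simp [repunit4]
  | succ k ih =>
    rw [repunit4, show 4 * repunit4 k + 1 = 2 * (2 * repunit4 k) + 1 by ring,
      bitRuns_two_mul_add_one, bitRuns_two_mul, ih]
    simp

lemma three_mul_repunit4_add_one (k : ℕ) : 3 * repunit4 k + 1 = 4 ^ k := by
  induction k with
  | zero => rfl
  | succ k ih => rw [repunit4, pow_succ]; omega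

lemma bitRuns_natAbs_add_one_le (z : ℤ) : bitRuns (z + 1).natAbs ≤ bitRuns z.natAbs + 1 := by
  obtain ⟨n, rfl | rfl⟩ := z.eq_nat_or_neg
  · exact bitRuns_succ_le n
  · rcases n with _ | n
    · simp [bitRuns_two_mul_add_one 0]
    · have h := bitRuns_le_succ_add_one n
      rwa [show (-((n + 1 : ℕ) : ℤ) + 1).natAbs = n by omega,
        show (-((n + 1 : ℕ) : ℤ)).natAbs = n + 1 by omega]

lemma bitRuns_natAbs_add_le (z σ : ℤ) :
    bitRuns (z + σ).natAbs ≤ bitRuns z.natAbs + σ.natAbs := by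
  induction σ using Int.induction_on with
  | zero => simp
  | succ i ih =>
    have h := bitRuns_natAbs_add_one_le (z + i)
    rw [← add_assoc]
    omega
  | pred i ih =>
    have h := bitRuns_natAbs_add_one_le (-(z + -i))
    rw [show -(z + -i) + 1 = -(z + (-i - 1)) by ring, Int.natAbs_neg, Int.natAbs_neg] at h
    omega

lemma natAbs_sum_le_card {M : Multiset ℤ} (hM : ∀ z ∈ M, z.natAbs = 1) :
    M.sum.natAbs ≤ Multiset.card M := by
  induction M using Multiset.induction_on with
  | empty => simp
  | cons a M ih =>
    rw [Multiset.sum_cons, Multiset.card_cons]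
    have h1 := hM a (Multiset.mem_cons_self a M)
    have h2 := ih fun z hz => hM z (Multiset.mem_cons_of_mem hz)
    have := Int.natAbs_add_le a M.sum
    omega

/-- Split off the odd terms, which are `±1`, and halve the others. -/
theorem bitRuns_natAbs_sum_le_card (M : Multiset ℤ)
    (hM : ∀ z ∈ M, z = 0 ∨ ∃ a : ℕ, z.natAbs = 2 ^ a) :
    bitRuns M.sum.natAbs ≤ Multiset.card M := by
  induction hn : (M.map Int.natAbs).sum using Nat.strong_induction_on generalizing M with
  | _ n ih =>
    rcases Nat.eq_zero_or_pos n with rfl | hn0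
    · rw [Multiset.sum_eq_zero fun z hz => ?_]
      · simp
      · simpa using (Multiset.sum_eq_zero_iff.1 hn) _ (Multiset.mem_map_of_mem _ hz)
    set M₀ := M.filter Odd
    set M₁ := M.filter fun z => ¬ Odd z
    set H := M₁.map (· / 2)
    have hsplit : M₀ + M₁ = M := Multiset.filter_add_not _ M
    have hhalf : ∀ z ∈ M₁, 2 * (z / 2) = z := fun z hz =>
      Int.mul_ediv_cancel' (Int.not_odd_iff_even.1 (Multiset.mem_filter.1 hz).2).two_dvd
    have hsum : M.sum = 2 * H.sum + M₀.sum := by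
      rw [← hsplit, Multiset.sum_add, ← Multiset.sum_map_mul_left, add_comm,
        Multiset.map_congr rfl hhalf, Multiset.map_id']
    have habs : 2 * (H.map Int.natAbs).sum = (M₁.map Int.natAbs).sum := by
      rw [← Multiset.sum_map_mul_left, Multiset.map_map]
      refine congrArg _ (Multiset.map_congr rfl fun z hz => ?_)
      simpa [Int.natAbs_mul] using congrArg Int.natAbs (hhalf z hz)
    have hH : ∀ z ∈ H, z = 0 ∨ ∃ a : ℕ, z.natAbs = 2 ^ a := by
      intro z hz
      obtain ⟨w, hw, rfl⟩ := Multiset.mem_map.1 hz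
      obtain ⟨hwM, heven⟩ := Multiset.mem_filter.1 hw
      have h2 := congrArg Int.natAbs (hhalf w hw)
      obtain rfl | ⟨_ | a, ha⟩ := hM w hwM
      · simp
      · exact absurd (Int.natAbs_odd.1 (by simp [ha])) heven
      · rw [Int.natAbs_mul, ha, pow_succ] at h2
        exact Or.inr ⟨a, by omega⟩
    have hM₀ : ∀ z ∈ M₀, z.natAbs = 1 := by
      intro z hz
      obtain ⟨hzM, hodd⟩ := Multiset.mem_filter.1 hz
      obtain rfl | ⟨_ | a, ha⟩ := hM z hzM
      · simp at hodd
      · simpa using ha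
      · have := Int.natAbs_odd.2 hodd
        rw [ha, pow_succ] at this
        exact absurd this (by simp)
    have hlt : (H.map Int.natAbs).sum < n := by
      have : (M₁.map Int.natAbs).sum ≤ n := by
        rw [← hn, ← hsplit, Multiset.map_add, Multiset.sum_add]; omega
      omega
    calc bitRuns M.sum.natAbs
        ≤ bitRuns (2 * H.sum).natAbs + M₀.sum.natAbs := hsum ▸ bitRuns_natAbs_add_le _ _
      _ ≤ Multiset.card H + Multiset.card M₀ := by
        rw [Int.natAbs_mul]
        exact add_le_add ((bitRuns_two_mul _).trans_le (ih _ hlt H hH rfl))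
          (natAbs_sum_le_card hM₀)
      _ = Multiset.card M := by
        rw [← hsplit, Multiset.card_map, Multiset.card_add, add_comm]

lemma mul_two_pow_eq_zero_or {e : ℤ} (he : e.natAbs ≤ 2) (h : ℕ) :
    e * 2 ^ h = 0 ∨ ∃ a : ℕ, (e * 2 ^ h).natAbs = 2 ^ a := by
  rw [Int.natAbs_mul, Int.natAbs_pow]
  obtain h0 | h1 | h2 : e.natAbs = 0 ∨ e.natAbs = 1 ∨ e.natAbs = 2 := by omega
  · simp [Int.natAbs_eq_zero.1 h0]
  · exact Or.inr ⟨h, by simp [h1]⟩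
  · exact Or.inr ⟨h + 1, by simp [h2, pow_succ']⟩

/-- The lowest run of `2 ^ t * repunit4 (k + 1)` is the single bit `t`; a perturbation smaller
than `2 ^ t` only changes the low `t + 1` bits, which stay nonzero. -/
lemma le_bitRuns_natAbs_sub (t k : ℕ) {C : ℤ} (hC : |C| < 2 ^ t) :
    k + 1 ≤ bitRuns (((2 ^ t * repunit4 (k + 1) : ℕ) : ℤ) - C).natAbs := by
  obtain ⟨hC₁, hC₂⟩ := abs_lt.1 hC
  obtain ⟨r, hr⟩ : ∃ r : ℕ, (r : ℤ) = 2 ^ t - C := ⟨_, Int.toNat_of_nonneg (by linarith)⟩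
  have hr₀ : r ≠ 0 := by rintro rfl; simp at hr; linarith
  have hr₁ : r < 2 ^ (t + 1) := by
    zify
    rw [hr, pow_succ]
    linarith
  have hval : (((2 ^ t * repunit4 (k + 1) : ℕ) : ℤ) - C).natAbs
      = 2 ^ (t + 1 + 1) * repunit4 k + r := by
    rw [← Int.natAbs_natCast (2 ^ (t + 1 + 1) * repunit4 k + r), repunit4]
    push_cast
    rw [hr]
    ring_nf
  rw [hval, bitRuns_two_pow_mul_add _ hr₁, bitRuns_repunit4]
  have := bitRuns_pos hr₀
  omega

/-- Summation by parts along a tree rooted at `r` with parent map `p`; subtree sizes are weights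
as in `hw`. -/
theorem sum_eq_mul_add_sum_sub_parent_mul {V : Type*} [Fintype V] [DecidableEq V] (r : V)
    (p : V → V) (w f : V → ℤ) (hw : ∀ x, ∑ v ∈ univ.erase r with p v = x, w v = w x - 1) :
    ∑ v, f v = f r * w r + ∑ v ∈ univ.erase r, (f v - f (p v)) * w v := by
  have hparent : ∑ v ∈ univ.erase r, f (p v) * w v = ∑ x, f x * (w x - 1) := by
    rw [← sum_fiberwise_of_maps_to (g := p) (t := univ) fun _ _ => mem_univ _]
    refine sum_congr rfl fun x _ => ?_
    rw [← hw x, mul_sum]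
    exact sum_congr rfl fun v hv => by rw [(mem_filter.1 hv).2]
  simp_rw [sub_mul, sum_sub_distrib, hparent, mul_sub, mul_one, sum_sub_distrib]
  rw [sum_erase_eq_sub (mem_univ r)]
  ring

theorem le_isoPeak {V : Type*} [Finite V] (G : SimpleGraph V) {s k : ℕ} (hs : s ≤ Nat.card V)
    (h : ∀ S : Set V, S.ncard = s → k ≤ (vertexBorder G S).ncard) : k ≤ isoPeak G := by
  obtain ⟨S₀, -, hS₀⟩ := Set.exists_subset_card_eq (s := (Set.univ : Set V)) (n := s)
    (by rwa [Set.ncard_univ])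
  have hprofile : k ≤ isoProfile G s :=
    le_csInf ⟨_, S₀, hS₀, rfl⟩ fun _ ⟨S, hS, hb⟩ => hb ▸ h S hS
  exact hprofile.trans
    (le_csSup ((Set.finite_Icc _ _).image _).bddAbove ⟨s, ⟨Nat.zero_le _, hs⟩, rfl⟩)

namespace QV

variable {q d : ℕ}

noncomputable instance : Fintype (QV q d) := Fintype.ofFinite _

def root : QV q d := ⟨[], by simp⟩

def parent (v : QV q d) : QV q d := ⟨v.val.dropLast, by simpa using (Nat.sub_le _ _).trans v.2⟩

def height (v : QV q d) : ℕ := d - v.val.length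

lemma isChildOf_iff {v x : QV q d} : IsChildOf v x ↔ v ≠ root ∧ parent v = x := by
  constructor
  · rintro ⟨a, ha⟩
    refine ⟨fun h => by simpa [h, root] using congrArg List.length ha, Subtype.ext ?_⟩
    simp [parent, ha]
  · rintro ⟨hv, rfl⟩
    have hv' : v.val ≠ [] := fun h => hv (Subtype.ext h)
    exact ⟨_, (List.dropLast_append_getLast hv').symm⟩

lemma IsChildOf.length_eq {v x : QV q d} (h : IsChildOf v x) :
    v.val.length = x.val.length + 1 := by
  obtain ⟨a, ha⟩ := h
  simp [ha]

lemma IsChildOf.height_add_one {v x : QV q d} (h : IsChildOf v x) :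
    height v + 1 = height x := by
  have := v.2
  have := h.length_eq
  simp only [height]
  omega

lemma qTree_adj_of_isChildOf {v x : QV q d} (h : IsChildOf v x) : (qTree q d).Adj x v :=
  Or.inl h

lemma card_isChildOf (x : QV q d) :
    #{v | IsChildOf v x} = if x.val.length < d then q else 0 := by
  split_ifs with hx
  · let child : Fin q → QV q d := fun a => ⟨x.val ++ [a], by simpa using hx⟩
    have hinj : Function.Injective child := fun a b h => by
      simpa [child] using congrArg Subtype.val h
    have : ({v | IsChildOf v x} : Finset (QV q d)) = univ.image child := by
      ext v
      rw [mem_filter, mem_image]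
      exact ⟨fun ⟨_, a, ha⟩ => ⟨a, mem_univ _, Subtype.ext ha.symm⟩,
        fun ⟨a, _, ha⟩ => ⟨mem_univ _, a, ha ▸ rfl⟩⟩
    rw [this, card_image_of_injective _ hinj, card_univ, Fintype.card_fin]
  · refine card_eq_zero.2 (filter_eq_empty_iff.2 fun v _ hv => ?_)
    have := v.2
    have := hv.length_eq
    omega

theorem card_eq_sum_pow (q d : ℕ) : Nat.card (QV q d) = ∑ i ∈ range (d + 1), q ^ i := by
  rw [Nat.card_eq_fintype_card, ← card_univ, card_eq_sum_card_fiberwise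
    (f := fun v : QV q d => v.val.length) fun v _ => mem_range.2 (Nat.lt_succ_of_le v.2)]
  refine sum_congr rfl fun i hi => ?_
  rw [← Fintype.card_subtype]
  calc _ = Fintype.card (List.Vector (Fin q) i) :=
        Fintype.card_congr (α := {v : QV q d // v.val.length = i})
          (Equiv.subtypeSubtypeEquivSubtype (p := fun l : List (Fin q) => l.length ≤ d)
            (q := fun l => l.length = i) fun h => h ▸ Nat.le_of_lt_succ (mem_range.1 hi))
    _ = q ^ i := by simp

noncomputable def childrenIn (S : Finset (QV q d)) (x : QV q d) : Finset (QV q d) :=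
  {v ∈ S | IsChildOf v x}

lemma card_childrenIn_le (S : Finset (QV q d)) (x : QV q d) : #(childrenIn S x) ≤ q := by
  refine (card_le_card (filter_subset_filter _ (subset_univ S))).trans ?_
  rw [card_isChildOf]
  split_ifs <;> omega

lemma sum_isChildOf_two_pow (x : QV 2 d) :
    ∑ v with IsChildOf v x, ((2 : ℤ) ^ (height v + 1) - 1) = 2 ^ (height x + 1) - 2 := by
  rw [sum_congr rfl fun v hv => by rw [(mem_filter.1 hv).2.height_add_one], sum_const,
    card_isChildOf]
  split_ifs with hx
  · rw [nsmul_eq_mul, pow_succ]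
    ring
  · have : height x = 0 := by simp only [height]; omega
    simp [this]

lemma sum_indicator_sub_parent_mul (S : Finset (QV 2 d)) :
    ∑ v ∈ univ.erase root, ((if v ∈ S then 1 else 0) - (if parent v ∈ S then 1 else 0)) *
        ((2 : ℤ) ^ (height v + 1) - 1) =
      ∑ x ∈ Sᶜ, (#(childrenIn S x) * ((2 : ℤ) ^ height x - 1) -
        if x ≠ root ∧ parent x ∈ S then 2 ^ (height x + 1) - 1 else 0) := by
  set w : QV 2 d → ℤ := fun v => 2 ^ (height v + 1) - 1
  have hsplit : ∀ v, ((if v ∈ S then 1 else 0) - (if parent v ∈ S then 1 else 0)) * w v =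
      (if v ∈ S ∧ parent v ∉ S then w v else 0) - (if v ∉ S ∧ parent v ∈ S then w v else 0) := by
    intro v
    split_ifs <;> simp_all
  have hin : ∑ v ∈ univ.erase root with v ∈ S ∧ parent v ∉ S, w v =
      ∑ x ∈ Sᶜ, #(childrenIn S x) * ((2 : ℤ) ^ height x - 1) := by
    rw [← sum_fiberwise_of_maps_to (g := parent) (t := Sᶜ)
      fun v hv => mem_compl.2 (mem_filter.1 hv).2.2]
    refine sum_congr rfl fun x hx => ?_
    have hfib : ((univ.erase root).filter fun v => v ∈ S ∧ parent v ∉ S).filter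
        (fun v => parent v = x) = childrenIn S x := by
      ext v
      simp only [childrenIn, mem_filter, mem_erase, mem_univ, isChildOf_iff]
      constructor
      · rintro ⟨⟨⟨hv, -⟩, hvS, -⟩, rfl⟩
        exact ⟨hvS, hv, rfl⟩
      · rintro ⟨hvS, hv, rfl⟩
        exact ⟨⟨⟨hv, trivial⟩, hvS, mem_compl.1 hx⟩, rfl⟩
    rw [hfib, sum_congr rfl fun v hv => show w v = 2 ^ height x - 1 by
      rw [← (mem_filter.1 hv).2.height_add_one], sum_const, nsmul_eq_mul]
  have hout : ∑ v ∈ univ.erase root with v ∉ S ∧ parent v ∈ S, w v =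
      ∑ x ∈ Sᶜ, if x ≠ root ∧ parent x ∈ S then w x else 0 := by
    rw [← sum_filter]
    congr 1
    ext x
    simp only [mem_filter, mem_erase, mem_univ, mem_compl]
    tauto
  rw [sum_congr rfl fun v _ => hsplit v, sum_sub_distrib, ← sum_filter, ← sum_filter, hin, hout,
    ← sum_sub_distrib]

theorem card_eq_sum_vertexBorder (S : Finset (QV 2 d)) :
    (#S : ℤ) = (if root ∈ S then 2 ^ (d + 1) - 1 else 0) +
      ∑ x ∈ (vertexBorder (qTree 2 d) S).toFinset,
        (#(childrenIn S x) * ((2 : ℤ) ^ height x - 1) -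
          if x ≠ root ∧ parent x ∈ S then 2 ^ (height x + 1) - 1 else 0) := by
  have hw : ∀ x : QV 2 d, ∑ v ∈ univ.erase root with parent v = x, ((2 : ℤ) ^ (height v + 1) - 1) =
      (2 ^ (height x + 1) - 1) - 1 := by
    intro x
    rw [show (univ.erase root).filter (parent · = x) = ({v | IsChildOf v x} : Finset _) by
      ext; simp [isChildOf_iff], sum_isChildOf_two_pow]
    ring
  have habel := sum_eq_mul_add_sum_sub_parent_mul (root : QV 2 d) parent _
    (fun v => if v ∈ S then 1 else 0) hw
  rw [sum_boole, filter_mem_eq_inter, univ_inter, sum_indicator_sub_parent_mul] at habel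
  have hsub : (vertexBorder (qTree 2 d) S).toFinset ⊆ Sᶜ := fun x hx =>
    mem_compl.2 (Set.mem_toFinset.1 hx).1
  rw [habel, sum_subset hsub]
  · congr 1
    split_ifs <;> simp [height, root]
  · intro x hxS hxB
    have hno : ¬ ∃ u ∈ S, (qTree 2 d).Adj u x := fun h =>
      hxB (Set.mem_toFinset.2 ⟨mem_compl.1 hxS, h⟩)
    have hchild : childrenIn S x = ∅ :=
      filter_eq_empty_iff.2 fun v hv hvx => hno ⟨v, hv, (qTree_adj_of_isChildOf hvx).symm⟩
    have hparent : ¬ (x ≠ root ∧ parent x ∈ S) := fun ⟨hx, hp⟩ =>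
      hno ⟨_, hp, qTree_adj_of_isChildOf (isChildOf_iff.2 ⟨hx, rfl⟩)⟩
    simp [hchild, hparent]

theorem exists_card_eq_multiset_sum_add (S : Finset (QV 2 d)) :
    ∃ M : Multiset ℤ, (∀ z ∈ M, z = 0 ∨ ∃ a : ℕ, z.natAbs = 2 ^ a) ∧
      Multiset.card M = (vertexBorder (qTree 2 d) S).ncard + 1 ∧
      ∃ C : ℤ, |C| ≤ 2 * (vertexBorder (qTree 2 d) S).ncard + 1 ∧ (#S : ℤ) = M.sum + C := by
  set B := (vertexBorder (qTree 2 d) S).toFinset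
  have hchildren : ∀ x, #(childrenIn S x) ≤ 2 := card_childrenIn_le S
  rw [Set.ncard_eq_toFinset_card']
  refine ⟨(B.val.map fun x =>
      ((#(childrenIn S x) : ℤ) - if x ≠ root ∧ parent x ∈ S then 2 else 0) * 2 ^ height x) +
      {if root ∈ S then 2 ^ (d + 1) else 0}, ?_, ?_,
    ∑ x ∈ B, ((if x ≠ root ∧ parent x ∈ S then 1 else 0) - (#(childrenIn S x) : ℤ)) -
      if root ∈ S then 1 else 0, ?_, ?_⟩
  · simp only [Multiset.mem_add, Multiset.mem_map, Multiset.mem_singleton]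
    rintro z (⟨x, -, rfl⟩ | rfl)
    · exact mul_two_pow_eq_zero_or (by have := hchildren x; split_ifs <;> omega) _
    · split_ifs
      · exact Or.inr ⟨d + 1, by simp⟩
      · exact Or.inl rfl
  · simp [B]
  · calc _ ≤ |∑ x ∈ B, ((if x ≠ root ∧ parent x ∈ S then 1 else 0) - (#(childrenIn S x) : ℤ))|
            + |if root ∈ S then (1 : ℤ) else 0| := abs_sub _ _
      _ ≤ ∑ x ∈ B, (2 : ℤ) + 1 := by
        gcongr
        · refine (abs_sum_le_sum_abs _ _).trans (sum_le_sum fun x _ => ?_)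
          have := hchildren x
          rw [abs_le]
          split_ifs <;> omega
        · split_ifs <;> simp
      _ = 2 * #B + 1 := by simp [mul_comm]
  · have hterm : ∀ x, (#(childrenIn S x) : ℤ) * (2 ^ height x - 1) -
          (if x ≠ root ∧ parent x ∈ S then 2 ^ (height x + 1) - 1 else 0) =
        ((#(childrenIn S x) : ℤ) - if x ≠ root ∧ parent x ∈ S then 2 else 0) * 2 ^ height x +
          ((if x ≠ root ∧ parent x ∈ S then 1 else 0) - #(childrenIn S x)) := fun x => by
      split_ifs <;> ring
    rw [card_eq_sum_vertexBorder, Multiset.sum_add, Multiset.sum_singleton, sum_map_val,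
      sum_congr rfl fun x _ => hterm x, sum_add_distrib]
    split_ifs <;> ring

theorem le_ncard_vertexBorder {t k : ℕ} (hk : 2 * k ≤ 2 ^ t) (S : Finset (QV 2 d))
    (hS : #S = 2 ^ t * repunit4 (k + 1)) : k ≤ (vertexBorder (qTree 2 d) S).ncard := by
  by_contra! hb
  obtain ⟨M, hM, hcard, C, hC, hsum⟩ := exists_card_eq_multiset_sum_add S
  have hupper := bitRuns_natAbs_sum_le_card M hM
  have hlower := le_bitRuns_natAbs_sub t k (C := C) (by zify at hk hb; omega)
  rw [← hS, hsum, add_sub_cancel_right] at hlower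
  omega

end QV

theorem le_isoPeak_qTree_two {d t k : ℕ} (hk : 2 * k ≤ 2 ^ t) (htk : t + 2 * k ≤ d) :
    k ≤ isoPeak (qTree 2 d) := by
  refine le_isoPeak _ (s := 2 ^ t * repunit4 (k + 1)) ?_ fun S hS => ?_
  · have hsize : 3 * (2 ^ t * repunit4 (k + 1)) + 2 ^ t = 2 ^ (t + 2 * k + 2) := by
      rw [show t + 2 * k + 2 = t + 2 * (k + 1) by ring, pow_add, pow_mul,
        show (2 : ℕ) ^ 2 = 4 by norm_num, ← three_mul_repunit4_add_one]
      ring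
    have hcard : Nat.card (QV 2 d) = 2 ^ (d + 1) - 1 := by
      rw [QV.card_eq_sum_pow, Nat.geomSum_eq le_rfl]
      simp
    have := Nat.pow_le_pow_right two_pos (show t + 2 * k + 2 ≤ d + 1 + 1 by omega)
    have := Nat.one_le_two_pow (n := t)
    rw [hcard, pow_succ _ (d + 1)] at *
    omega
  · have := QV.le_ncard_vertexBorder hk S.toFinset (by rwa [← Set.ncard_eq_toFinset_card'])
    rwa [Set.coe_toFinset] at this

theorem sub_clog_div_two_le_isoPeak (d : ℕ) :
    (d - Nat.clog 2 (3 * d)) / 2 ≤ isoPeak (qTree 2 d) := by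
  rcases Nat.eq_zero_or_pos ((d - Nat.clog 2 (3 * d)) / 2) with hk | hk
  · simp [hk]
  · have : 3 * d ≤ 2 ^ Nat.clog 2 (3 * d) := Nat.le_pow_clog one_lt_two _
    exact le_isoPeak_qTree_two (t := Nat.clog 2 (3 * d)) (by omega) (by omega)

theorem binary_tree_iso_peak_lower_general (d : ℕ) :
    (⌊(((d : ℤ) - ⌈Real.logb 2 (3 * (d : ℝ))⌉ : ℤ) : ℝ) / 2⌋ : ℤ) ≤
      (isoPeak (qTree 2 d) : ℤ) ∧
    ((d : ℝ) - Real.logb 2 d) / 2 - (3 + Real.logb 2 3) / 2 ≤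
      ((⌊(((d : ℤ) - ⌈Real.logb 2 (3 * (d : ℝ))⌉ : ℤ) : ℝ) / 2⌋ : ℤ) : ℝ) := by
  constructor
  · have hlog : ⌈Real.logb 2 (3 * (d : ℝ))⌉ = Nat.clog 2 (3 * d) := by
      have := Real.ceil_logb_natCast (b := 2) (r := ((3 * d : ℕ) : ℝ)) (Nat.cast_nonneg _)
      rw [Int.clog_natCast] at this
      exact_mod_cast this
    have hpeak := sub_clog_div_two_le_isoPeak d
    rw [hlog, Int.floor_le_iff]
    have : (d : ℝ) < Nat.clog 2 (3 * d) + 2 * ((d - Nat.clog 2 (3 * d)) / 2 : ℕ) + 2 := by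
      exact_mod_cast (by omega)
    have : ((d - Nat.clog 2 (3 * d)) / 2 : ℕ) ≤ (isoPeak (qTree 2 d) : ℝ) := by
      exact_mod_cast hpeak
    push_cast
    linarith
  · have hceil := Int.ceil_lt_add_one (Real.logb 2 (3 * (d : ℝ)))
    have hfloor := Int.sub_one_lt_floor ((((d : ℤ) - ⌈Real.logb 2 (3 * (d : ℝ))⌉ : ℤ) : ℝ) / 2)
    have hmul : Real.logb 2 (3 * d) ≤ Real.logb 2 3 + Real.logb 2 d := by
      rcases eq_or_ne d 0 with rfl | hd
      · simpa using Real.logb_nonneg one_lt_two (by norm_num : (1 : ℝ) ≤ 3)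
      · rw [Real.logb_mul (by norm_num) (by positivity)]
    push_cast at hfloor ⊢
    linarith

theorem binary_tree_iso_peak_lower (d : ℕ) (hd : 1 ≤ d) :
    (⌊(((d : ℤ) - ⌈Real.logb 2 (3 * (d : ℝ))⌉ : ℤ) : ℝ) / 2⌋ : ℤ) ≤
      (isoPeak (qTree 2 d) : ℤ) ∧
    ((d : ℝ) - Real.logb 2 d) / 2 - (3 + Real.logb 2 3) / 2 ≤
      ((⌊(((d : ℤ) - ⌈Real.logb 2 (3 * (d : ℝ))⌉ : ℤ) : ℝ) / 2⌋ : ℤ) : ℝ) :=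
  binary_tree_iso_peak_lower_general d
end

section
/- Let T be the complete q-ary tree of depth d (q ≥ 2, d ≥ 1) and let S ⊆ V(T) be left-ordered and down-compressed. Suppose u ∈ V(T) and i are such that Desc(u) ∩ S ∩ L_i is non-empty. Then Desc(u) ∩ S ∩ L_{i'} is non-empty for every i' with i ≤ i' ≤ d. -/
open scoped Classical

/-!
Induct on the level: it suffices that every non-leaf `x ∈ S` has a child in `S`. If not, all
children of `x` lie in the border, and we move `x` to a deeper vertex `w ∉ S` without enlarging
the border, against down-compression. The move adds at most `x` and the neighbours of `w`
outside `S` to the border, and removes every child of `x` other than `w` whose only neighbour in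
`S` was `x`.

* If some grandchild of `x` is in `S`, left-ordering puts `x00` in `S`, and we take `w = x0`.
  Either all children of `x0` are in `S`, so the border loses `x0` and gains only `x`; or some
  `x0t ∉ S`, and then left-ordering puts every grandchild of `x` in `S` below `x0`: all `q`
  children of `x` leave the border, while at most `x` and the `q - 1` children of `x0` other
  than `x00` enter it.
* Otherwise take for `w` a deepest vertex outside `S` below the level of `x`: its children are
  in `S`, so at most `x` and the parent of `w` enter the border, and the `q ≥ 2` children of `x`
  leave it.
-/

section Border

variable {V : Type*} (G : SimpleGraph V)

theorem vertexBorder_move_subset {S B : Set V} {x w : V}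
    (hB : ∀ b ∈ B, b ≠ w → ∀ n ∈ S, G.Adj n b → n = x) :
    vertexBorder G ((S ∪ {w}) \ {x}) ⊆
      (vertexBorder G S \ B) ∪ insert x {z | G.Adj w z ∧ z ∉ S} := by
  rintro z ⟨hz, n, ⟨hnS | rfl, hnx⟩, hnz⟩ <;> by_cases hzx : z = x
  · exact Or.inr (Or.inl hzx)
  · have hzw : z ≠ w := fun h => hz ⟨Or.inr h, hzx⟩
    have hzS : z ∉ S := fun h => hz ⟨Or.inl h, hzx⟩
    exact Or.inl ⟨⟨hzS, n, hnS, hnz⟩, fun hzB => hnx (hB z hzB hzw n hnS hnz)⟩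
  · exact Or.inr (Or.inl hzx)
  · exact Or.inr (Or.inr ⟨hnz, fun h => hz ⟨Or.inl h, hzx⟩⟩)

theorem ncard_vertexBorder_move_le [Finite V] {S B : Set V} {x w : V}
    (hBS : B ⊆ vertexBorder G S) (hB : ∀ b ∈ B, b ≠ w → ∀ n ∈ S, G.Adj n b → n = x)
    (hcard : {z | G.Adj w z ∧ z ∉ S}.ncard < B.ncard) :
    (vertexBorder G ((S ∪ {w}) \ {x})).ncard ≤ (vertexBorder G S).ncard := by
  have hsdiff := Set.ncard_sdiff hBS
  have hB_le := Set.ncard_le_ncard hBS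
  calc (vertexBorder G ((S ∪ {w}) \ {x})).ncard
      ≤ (vertexBorder G S \ B).ncard + (insert x {z | G.Adj w z ∧ z ∉ S}).ncard :=
        (Set.ncard_le_ncard (vertexBorder_move_subset G hB)).trans (Set.ncard_union_le _ _)
    _ ≤ (vertexBorder G S).ncard - B.ncard + ({z | G.Adj w z ∧ z ∉ S}.ncard + 1) := by
        rw [hsdiff]; gcongr; exact Set.ncard_insert_le _ _
    _ ≤ (vertexBorder G S).ncard := by omega

end Border

namespace QV

variable {q d : ℕ}

def child (x : QV q d) (hx : x.val.length < d) (a : Fin q) : QV q d :=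
  ⟨x.val ++ [a], by simp; omega⟩

theorem child_isChildOf (x : QV q d) (hx : x.val.length < d) (a : Fin q) :
    IsChildOf (child x hx a) x :=
  ⟨a, rfl⟩

theorem IsChildOf.length_eq_s15 {w u : QV q d} (h : IsChildOf w u) :
    w.val.length = u.val.length + 1 := by
  obtain ⟨a, ha⟩ := h
  simp [ha]

theorem IsChildOf.isPrefix {w u : QV q d} (h : IsChildOf w u) : u.val <+: w.val := by
  obtain ⟨a, ha⟩ := h
  exact ⟨[a], ha.symm⟩

theorem IsChildOf.parent_eq {w u v : QV q d} (hu : IsChildOf w u) (hv : IsChildOf w v) :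
    u = v := by
  obtain ⟨a, ha⟩ := hu
  obtain ⟨b, hb⟩ := hv
  have hlen : u.val.length = v.val.length := by
    simpa using congrArg List.length (ha.symm.trans hb)
  exact Subtype.ext (List.append_inj (ha.symm.trans hb) hlen).1

theorem IsChildOf.eq_or_isChildOf_of_adj {b x n : QV q d} (hb : IsChildOf b x)
    (h : (qTree q d).Adj n b) : n = x ∨ IsChildOf n b :=
  h.elim (fun hbn => Or.inl (IsChildOf.parent_eq hbn hb)) Or.inr

theorem ncard_setOf_isChildOf {x : QV q d} (hx : x.val.length < d) :
    {w | IsChildOf w x}.ncard = q := by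
  have hinj : Function.Injective (child x hx) := fun a b hab => by
    simpa [child] using congrArg Subtype.val hab
  have hrange : {w | IsChildOf w x} = Set.range (child x hx) := by
    ext w
    exact ⟨fun ⟨a, ha⟩ => ⟨a, Subtype.ext ha.symm⟩, fun ⟨a, ha⟩ => ha ▸ child_isChildOf x hx a⟩
  rw [hrange, Set.ncard_range_of_injective hinj, Nat.card_eq_fintype_card, Fintype.card_fin]

theorem ncard_setOf_parent_le_one (w : QV q d) : {u | IsChildOf w u}.ncard ≤ 1 :=
  Set.ncard_le_one_iff_subsingleton.mpr fun _ hu _ hv => IsChildOf.parent_eq hu hv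

theorem setOf_isChildOf_subset_vertexBorder {S : Set (QV q d)} {x : QV q d} (hx : x ∈ S)
    (hch : ∀ b, IsChildOf b x → b ∉ S) :
    {b | IsChildOf b x} ⊆ vertexBorder (qTree q d) S :=
  fun b hb => ⟨hch b hb, x, hx, Or.inl hb⟩

theorem LeftOrdered.mem_of_lex {S : Set (QV q d)} (hlo : LeftOrdered S) {u v : QV q d}
    {p l₁ l₂ : List (Fin q)} (hu : u.val = p ++ l₁) (hv : v.val = p ++ l₂)
    (hlen : l₁.length = l₂.length) (hlex : List.Lex (· < ·) l₁ l₂) (hvS : v ∈ S) : u ∈ S := by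
  by_contra huS
  refine hlo _ u v rfl ⟨⟨by simp [hu, hv, hlen], ?_⟩, Or.inl ⟨huS, hvS⟩⟩
  rw [hu, hv]
  exact List.Lex.append_left _ hlex p

theorem ncard_vertexBorder_move_le_of_no_grandchild (hq : 2 ≤ q) {S : Set (QV q d)}
    {x w : QV q d} (hxd : x.val.length < d) (hx : x ∈ S) (hch : ∀ b, IsChildOf b x → b ∉ S)
    (hgc : ∀ b y, IsChildOf b x → IsChildOf y b → y ∉ S) (hw : ∀ y, IsChildOf y w → y ∈ S) :
    (vertexBorder (qTree q d) ((S ∪ {w}) \ {x})).ncard ≤ (vertexBorder (qTree q d) S).ncard := by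
  refine ncard_vertexBorder_move_le _ (setOf_isChildOf_subset_vertexBorder hx hch) ?_ ?_
  · intro b hb _ n hnS hnb
    exact (IsChildOf.eq_or_isChildOf_of_adj hb hnb).resolve_right fun h => hgc b n hb h hnS
  · have hsub : {z | (qTree q d).Adj w z ∧ z ∉ S} ⊆ {u | IsChildOf w u} := by
      rintro z ⟨hz | hz, hzS⟩
      · exact absurd (hw z hz) hzS
      · exact hz
    have := (Set.ncard_le_ncard hsub).trans (ncard_setOf_parent_le_one w)
    rw [ncard_setOf_isChildOf hxd]
    omega

theorem ncard_vertexBorder_move_first_child_le [NeZero q] {S : Set (QV q d)}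
    (hlo : LeftOrdered S) {x : QV q d} (hxd : x.val.length < d) (hx : x ∈ S)
    (hch : ∀ b, IsChildOf b x → b ∉ S) (hgc : ∃ b y, IsChildOf b x ∧ IsChildOf y b ∧ y ∈ S) :
    (vertexBorder (qTree q d) ((S ∪ {child x hxd 0}) \ {x})).ncard ≤
      (vertexBorder (qTree q d) S).ncard := by
  set c := child x hxd 0 with hc
  have hcx : IsChildOf c x := child_isChildOf x hxd 0
  obtain ⟨b, y, hbx, hyb, hyS⟩ := hgc
  have hcd : c.val.length < d := by
    have := y.2
    rw [hyb.length_eq_s15, hbx.length_eq_s15] at this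
    rw [hcx.length_eq_s15]
    omega
  obtain ⟨a, hb⟩ := hbx
  obtain ⟨a', hy⟩ := hyb
  have hyval : y.val = x.val ++ [a, a'] := by simp [hy, hb]
  set y₀ := child c hcd 0
  have hy₀S : y₀ ∈ S := by
    have hy₀val : y₀.val = x.val ++ [0, 0] := by simp [y₀, hc, child]
    by_cases ha : a = 0
    · by_cases ha' : a' = 0
      · have : y₀ = y := Subtype.ext (by rw [hy₀val, hyval, ha, ha'])
        exact this ▸ hyS
      · refine hlo.mem_of_lex (p := x.val ++ [0]) (l₁ := [0]) (l₂ := [a'])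
          (by simp [hy₀val]) (by simp [hyval, ha]) rfl ?_ hyS
        exact List.Lex.rel ((Fin.pos_iff_ne_zero' a').mpr ha')
    · exact hlo.mem_of_lex hy₀val hyval rfl (List.Lex.rel ((Fin.pos_iff_ne_zero' a).mpr ha)) hyS
  by_cases hall : ∀ z, IsChildOf z c → z ∈ S
  · refine ncard_vertexBorder_move_le _ (B := {c}) ?_ ?_ ?_
    · exact Set.singleton_subset_iff.mpr ⟨hch c hcx, x, hx, Or.inl hcx⟩
    · exact fun b hb hbc => absurd hb hbc
    · have hempty : {z | (qTree q d).Adj c z ∧ z ∉ S} = ∅ := by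
        refine Set.eq_empty_of_forall_notMem ?_
        rintro z ⟨hz | hz, hzS⟩
        · exact hzS (hall z hz)
        · exact hzS (IsChildOf.parent_eq hz hcx ▸ hx)
      simp [hempty]
  · push Not at hall
    obtain ⟨y₁, ⟨t, hy₁⟩, hy₁S⟩ := hall
    refine ncard_vertexBorder_move_le _ (setOf_isChildOf_subset_vertexBorder hx hch) ?_ ?_
    · rintro b ⟨e, hbe⟩ hbc n hnS hnb
      refine (IsChildOf.eq_or_isChildOf_of_adj ⟨e, hbe⟩ hnb).resolve_right ?_
      rintro ⟨s, hns⟩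
      have he : e ≠ 0 := fun he => hbc (Subtype.ext (by rw [hbe, he]; rfl))
      refine hy₁S (hlo.mem_of_lex (p := x.val) (l₁ := [0, t]) (l₂ := [e, s])
        (by simp [hy₁, hc, child]) (by simp [hns, hbe]) rfl ?_ hnS)
      exact List.Lex.rel ((Fin.pos_iff_ne_zero' e).mpr he)
    · have hsub : {z | (qTree q d).Adj c z ∧ z ∉ S} ⊆ {z | IsChildOf z c} \ {y₀} := by
        rintro z ⟨hz | hz, hzS⟩
        · exact ⟨hz, fun h => hzS (h ▸ hy₀S)⟩
        · exact absurd (IsChildOf.parent_eq hz hcx ▸ hx) hzS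
      calc {z | (qTree q d).Adj c z ∧ z ∉ S}.ncard
          ≤ ({z | IsChildOf z c} \ {y₀}).ncard := Set.ncard_le_ncard hsub
        _ < {z | IsChildOf z c}.ncard :=
            Set.ncard_sdiff_singleton_lt_of_mem (child_isChildOf c hcd 0)
        _ = {b | IsChildOf b x}.ncard := by
            rw [ncard_setOf_isChildOf hcd, ncard_setOf_isChildOf hxd]

theorem exists_notMem_forall_child_mem {S : Set (QV q d)} {c : QV q d} (hc : c ∉ S) :
    ∃ w ∉ S, c.val.length ≤ w.val.length ∧ ∀ y, IsChildOf y w → y ∈ S := by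
  obtain ⟨w, ⟨hwS, hcw⟩, hmax⟩ := Set.Finite.exists_maximalFor (fun v : QV q d => v.val.length)
    {v | v ∉ S ∧ c.val.length ≤ v.val.length} (Set.toFinite _) ⟨c, hc, le_rfl⟩
  refine ⟨w, hwS, hcw, fun y hy => by_contra fun hyS => ?_⟩
  have hyw := hy.length_eq_s15
  have := hmax (j := y) ⟨hyS, by omega⟩ (by simp only; omega)
  simp only at this
  omega

theorem exists_child_mem (hq : 2 ≤ q) {S : Set (QV q d)} (hlo : LeftOrdered S)
    (hdc : DownCompressed S) {x : QV q d} (hx : x ∈ S) (hxd : x.val.length < d) :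
    ∃ y, IsChildOf y x ∧ y ∈ S := by
  by_contra! hch
  have : NeZero q := ⟨by omega⟩
  obtain ⟨w, hwS, hlt, hle⟩ : ∃ w ∉ S, x.val.length < w.val.length ∧
      (vertexBorder (qTree q d) ((S ∪ {w}) \ {x})).ncard ≤
        (vertexBorder (qTree q d) S).ncard := by
    have hc := child_isChildOf x hxd 0
    by_cases hgc : ∃ b y, IsChildOf b x ∧ IsChildOf y b ∧ y ∈ S
    · exact ⟨_, hch _ hc, by rw [hc.length_eq_s15]; omega,
        ncard_vertexBorder_move_first_child_le hlo hxd hx hch hgc⟩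
    · push Not at hgc
      obtain ⟨w, hwS, hcw, hw⟩ := exists_notMem_forall_child_mem (hch _ hc)
      exact ⟨w, hwS, by rw [hc.length_eq_s15] at hcw; omega,
        ncard_vertexBorder_move_le_of_no_grandchild hq hxd hx hch hgc hw⟩
  exact absurd hle ((hdc x hx w hwS).2 hlt).not_ge

end QV

theorem down_compressed_desc_all_levels_general (q d : ℕ) (hq : 2 ≤ q)
    (S : Set (QV q d)) (hlo : QV.LeftOrdered S) (hdc : QV.DownCompressed S)
    (u : QV q d) (i : ℕ) (h : (QV.desc u ∩ S ∩ QV.level q d i).Nonempty) :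
    ∀ i', i ≤ i' → i' ≤ d → (QV.desc u ∩ S ∩ QV.level q d i').Nonempty := by
  intro i' hii'
  induction i', hii' using Nat.le_induction with
  | base => exact fun _ => h
  | succ n _ ih =>
    intro hnd
    obtain ⟨x, ⟨hux, hxS⟩, hxn⟩ := ih (by omega)
    have hxn : x.val.length = n := hxn
    obtain ⟨y, hyx, hyS⟩ := QV.exists_child_mem hq hlo hdc hxS (by omega)
    exact ⟨y, ⟨hux.trans hyx.isPrefix, hyS⟩, hyx.length_eq_s15.trans (by rw [hxn])⟩

theorem down_compressed_desc_all_levels (q d : ℕ) (hq : 2 ≤ q) (hd : 1 ≤ d)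
    (S : Set (QV q d)) (hlo : QV.LeftOrdered S) (hdc : QV.DownCompressed S)
    (u : QV q d) (i : ℕ) (h : (QV.desc u ∩ S ∩ QV.level q d i).Nonempty) :
    ∀ i', i ≤ i' → i' ≤ d → (QV.desc u ∩ S ∩ QV.level q d i').Nonempty :=
  down_compressed_desc_all_levels_general q d hq S hlo hdc u i h
end
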